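/- Let G be a cyclic group of order n ≥ 4 with generator g, fix j with 3 ≤ j ≤ n, and set h = (j-1)g. The zero-sum sequence A = (-g)^(j-1) g^n h has exactly two factorizations into minimal zero-sum sequences, namely U·W and V^(j-1)·X, where U = g^n, V = g(-g), W = (-g)^(j-1) h, X = g^(n-j+1) h; consequently the catenary degree of A equals j. -/

import Mathlib

open scoped Classical

/-- A sequence over `G` (a multiset of elements of `G`) is a minimal zero-sum
sequence if it is nonempty, has sum zero, and no proper nonempty subsequence
has sum zero. These are the irreducibles of the block monoid `B(G)`. -/
def IsMinZeroSum {G : Type*} [AddCommGroup G] (s : Multiset G) : Prop :=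
  s ≠ 0 ∧ s.sum = 0 ∧ ∀ t ≤ s, t.sum = 0 → t = 0 ∨ t = s

/-- The set of factorizations of a zero-sum sequence `A` into minimal zero-sum
sequences: multisets of irreducibles of `B(G)` whose product (sum) is `A`. -/
def BFact {G : Type*} [AddCommGroup G] (A : Multiset G) :
    Set (Multiset (Multiset G)) :=
  {F | (∀ s ∈ F, IsMinZeroSum s) ∧ F.sum = A}

/-- The distance between two factorizations: the maximum of the lengths of the
parts remaining after cancelling the common irreducibles. -/
noncomputable def bdist {G : Type*} [AddCommGroup G] (F F' : Multiset (Multiset G)) : ℕ :=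
  max (F - F').card (F' - F).card

/-- There is an `N`-chain of factorizations within `Z` from `a` to `b`. -/
def BIsNChain {G : Type*} [AddCommGroup G] (Z : Set (Multiset (Multiset G)))
    (N : ℕ) (a b : Multiset (Multiset G)) : Prop :=
  ∃ l : List (Multiset (Multiset G)), l.head? = some a ∧ l.getLast? = some b ∧
    (∀ x ∈ l, x ∈ Z) ∧ l.Chain' (fun x y => bdist x y ≤ N)

/-- The catenary degree of a zero-sum sequence `A` in the block monoid: the
least `N` such that any two factorizations of `A` are joined by an `N`-chain. -/
noncomputable def bCatDeg {G : Type*} [AddCommGroup G] (A : Multiset G) : ℕ :=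
  sInf {N | ∀ F ∈ BFact A, ∀ F' ∈ BFact A, BIsNChain (BFact A) N F F'}

/-!
Every minimal zero-sum subsequence of `A` is one of `U`, `V`, `W`, `X`: one containing both `g`
and `-g` contains the atom `V`, and one avoiding `g` (resp. `-g`) lies below `(-g)^(j-1) h`
(resp. `gⁿ h`), where `addOrderOf g = n` pins down the exponents. A factorization containing
`U` (resp. `W`) factors `A U⁻¹ = W` (resp. `A W⁻¹ = U`), which is an atom. Otherwise only `V`
and `X` occur, and comparing the multiplicity of `g` with the length leaves `V^(j-1) X`.
The two factorizations share no atom, so the catenary degree is their distance `max 2 j = j`.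
-/

open Multiset

namespace Multiset

variable {α : Type*}

theorem le_of_le_replicate_add {s t : Multiset α} {a : α} {m : ℕ}
    (h : s ≤ replicate m a + t) (ha : a ∉ s) : s ≤ t := by
  induction m with
  | zero => simpa using h
  | succ m ih => exact ih ((le_cons_of_notMem ha).1 (by rwa [replicate_succ, cons_add] at h))

theorem exists_eq_replicate_of_le_replicate_add_singleton {s : Multiset α} {a b : α} {m : ℕ}
    (h : s ≤ replicate m a + {b}) :
    ∃ k ≤ m, s = replicate k a ∨ s = replicate k a + {b} := by
  by_cases hb : b ∈ s
  · have hle : s.erase b ≤ replicate m a := by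
      simpa [erase_add_right_pos _ (mem_singleton_self b)] using erase_le_erase b h
    obtain ⟨k, hk, hs⟩ := le_replicate_iff.1 hle
    refine ⟨k, hk, Or.inr ?_⟩
    rw [← hs, add_comm, singleton_add, cons_erase hb]
  · rw [add_comm, singleton_add, le_cons_of_notMem hb, le_replicate_iff] at h
    obtain ⟨k, hk, rfl⟩ := h
    exact ⟨k, hk, Or.inl rfl⟩

theorem exists_eq_replicate_add_replicate {s : Multiset α} {a b : α}
    (h : ∀ x ∈ s, x = a ∨ x = b) : ∃ p q, s = replicate p a + replicate q b := by
  refine ⟨count a s, (filter (· ≠ a) s).card, ?_⟩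
  have hrest : filter (· ≠ a) s = replicate (filter (· ≠ a) s).card b :=
    eq_replicate.2 ⟨rfl, fun x hx => (h x (mem_of_mem_filter hx)).resolve_left
      (of_mem_filter (p := (· ≠ a)) hx)⟩
  rw [← hrest, ← filter_eq']
  exact (filter_add_not (· = a) s).symm

end Multiset

theorem List.IsChain.rel_of_forall_mem_pair {α : Type*} {R : α → α → Prop} {a b : α}
    (hab : a ≠ b) {l : List α} (hl : l.IsChain R) (hhead : l.head? = some a)
    (hlast : l.getLast? = some b) (hmem : ∀ x ∈ l, x = a ∨ x = b) : R a b := by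
  induction l with
  | nil => simp at hhead
  | cons x xs ih =>
    obtain rfl : x = a := by simpa using hhead
    cases xs with
    | nil => exact absurd (by simpa using hlast) hab
    | cons y ys =>
      obtain ⟨hxy, hys⟩ := List.isChain_cons_cons.1 hl
      rcases hmem y (by simp) with rfl | rfl
      · exact ih hys rfl (by rwa [List.getLast?_cons_cons] at hlast)
          (fun z hz => hmem z (List.mem_cons_of_mem _ hz))
      · exact hxy

section BlockMonoid

variable {G : Type*} [AddCommGroup G]

theorem IsMinZeroSum.bFact_eq {s : Multiset G} (hs : IsMinZeroSum s) : BFact s = {{s}} := by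
  ext F
  refine ⟨fun ⟨hmin, hsum⟩ => ?_, ?_⟩
  · obtain ⟨t, ht⟩ := exists_mem_of_ne_zero (fun h0 : F = 0 => hs.1 (by simp [← hsum, h0]))
    obtain rfl : t = s :=
      (hs.2.2 t (hsum ▸ le_sum_of_mem ht) (hmin t ht).2.1).resolve_left (hmin t ht).1
    have hrest : (F.erase t).sum = 0 := by
      rwa [← cons_erase ht, sum_cons, add_eq_left] at hsum
    rw [Set.mem_singleton_iff, ← cons_erase ht, eq_zero_of_forall_notMem fun u hu =>
      (hmin u (mem_of_mem_erase hu)).1 (sum_eq_zero_iff.1 hrest u hu)]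
    rfl
  · rintro rfl
    exact ⟨by simpa using hs, sum_singleton s⟩

theorem erase_mem_bFact {A s : Multiset G} {F : Multiset (Multiset G)} (hF : F ∈ BFact A)
    (hs : s ∈ F) : F.erase s ∈ BFact (A - s) := by
  refine ⟨fun t ht => hF.1 t (mem_of_mem_erase ht), ?_⟩
  rw [← hF.2, ← cons_erase hs, sum_cons, erase_cons_head, add_tsub_cancel_left]

theorem bdist_comm (F F' : Multiset (Multiset G)) : bdist F F' = bdist F' F :=
  max_comm _ _

theorem bdist_of_disjoint {F F' : Multiset (Multiset G)} (h : Disjoint F F') :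
    bdist F F' = max F.card F'.card := by
  have sub_eq {X Y : Multiset (Multiset G)} (hXY : Disjoint X Y) : X - Y = X := by
    rw [← sub_inter, inter_eq_zero_iff_disjoint.2 hXY, tsub_zero]
  rw [bdist, sub_eq h, sub_eq h.symm]

theorem bIsNChain_self {Z : Set (Multiset (Multiset G))} {F : Multiset (Multiset G)} (hF : F ∈ Z)
    (N : ℕ) : BIsNChain Z N F F :=
  ⟨[F], rfl, rfl, by simpa using hF, List.isChain_singleton F⟩

theorem bIsNChain_of_bdist_le {Z : Set (Multiset (Multiset G))} {F F' : Multiset (Multiset G)}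
    (hF : F ∈ Z) (hF' : F' ∈ Z) {N : ℕ} (hN : bdist F F' ≤ N) : BIsNChain Z N F F' :=
  ⟨[F, F'], rfl, rfl, by simp [hF, hF'], List.isChain_pair.2 hN⟩

theorem bCatDeg_eq_bdist_of_bFact_eq_pair {A : Multiset G} {F₁ F₂ : Multiset (Multiset G)}
    (hne : F₁ ≠ F₂) (hA : BFact A = {F₁, F₂}) : bCatDeg A = bdist F₁ F₂ := by
  have hmem : bdist F₁ F₂ ∈
      {N | ∀ F ∈ BFact A, ∀ F' ∈ BFact A, BIsNChain (BFact A) N F F'} := by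
    intro F hF F' hF'
    by_cases hFF' : F = F'
    · exact hFF' ▸ bIsNChain_self hF _
    refine bIsNChain_of_bdist_le hF hF' (le_of_eq ?_)
    rw [hA] at hF hF'
    rcases hF with rfl | rfl <;> rcases hF' with rfl | rfl <;>
      first | exact absurd rfl hFF' | rfl | exact bdist_comm _ _
  refine le_antisymm (Nat.sInf_le hmem) (le_csInf ⟨_, hmem⟩ fun N hN => ?_)
  obtain ⟨l, hhead, hlast, hl, hchain⟩ := hN F₁ (by simp [hA]) F₂ (by simp [hA])
  exact hchain.rel_of_forall_mem_pair (R := fun x y => bdist x y ≤ N) hne hhead hlast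
    fun x hx => by simpa [hA] using hl x hx

end BlockMonoid

theorem isMinZeroSum_pair_neg {G : Type*} [AddCommGroup G] {x : G} (hx : x ≠ 0) :
    IsMinZeroSum ({x, -x} : Multiset G) := by
  refine ⟨by simp, by simp, fun t ht htsum => ?_⟩
  rw [insert_eq_cons] at ht ⊢
  by_cases hxt : x ∈ t
  · rw [← cons_erase hxt, cons_le_cons_iff, le_singleton] at ht
    rcases ht with ht | ht
    · rw [← cons_erase hxt, ht, sum_cons, sum_zero, add_zero] at htsum
      exact absurd htsum hx
    · rw [← cons_erase hxt, ht]
      exact Or.inr rfl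
  · rcases le_singleton.1 ((le_cons_of_notMem hxt).1 ht) with rfl | rfl
    · exact Or.inl rfl
    · exact absurd (neg_eq_zero.1 (by simpa using htsum)) hx

theorem self_ne_neg_of_two_lt_addOrderOf {G : Type*} [AddCommGroup G] {g : G}
    (hg : 2 < addOrderOf g) : g ≠ -g := by
  intro e
  have h2 : 2 • g = 0 := by
    rw [two_nsmul]
    nth_rewrite 2 [e]
    exact add_neg_cancel g
  have := addOrderOf_le_of_nsmul_eq_zero two_pos h2
  omega

theorem nsmul_ne_self_of_lt_addOrderOf {G : Type*} [AddCommGroup G] {g : G} {k : ℕ}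
    (hk : 2 ≤ k) (hkg : k < addOrderOf g) : k • g ≠ g := by
  intro e
  have : k = 1 := nsmul_injOn_Iio_addOrderOf hkg (show 1 < addOrderOf g by omega)
    (by simpa using e)
  omega

theorem pred_addOrderOf_nsmul {G : Type*} [AddCommGroup G] {g : G} (hg : 0 < addOrderOf g) :
    (addOrderOf g - 1) • g = -g := by
  refine eq_neg_of_add_eq_zero_left ?_
  rw [← succ_nsmul, Nat.sub_add_cancel hg, addOrderOf_nsmul_eq_zero]

namespace CatenaryExample

variable {G : Type*} [AddCommGroup G] {g : G} {n j : ℕ}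

def seqA (g : G) (n j : ℕ) : Multiset G :=
  replicate (j - 1) (-g) + replicate n g + {(j - 1) • g}

def seqU (g : G) (n : ℕ) : Multiset G := replicate n g

def seqV (g : G) : Multiset G := {g, -g}

def seqW (g : G) (j : ℕ) : Multiset G := replicate (j - 1) (-g) + {(j - 1) • g}

def seqX (g : G) (n j : ℕ) : Multiset G := replicate (n - j + 1) g + {(j - 1) • g}

def factUW (g : G) (n j : ℕ) : Multiset (Multiset G) := {seqU g n, seqW g j}

def factVX (g : G) (n j : ℕ) : Multiset (Multiset G) :=
  replicate (j - 1) (seqV g) + {seqX g n j}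

theorem seqA_eq_seqW_add_seqU : seqA g n j = seqW g j + seqU g n := by
  rw [seqA, seqW, seqU, add_right_comm]

theorem self_ne_neg (hg : addOrderOf g = n) (hj3 : 3 ≤ j) (hjn : j ≤ n) : g ≠ -g :=
  self_ne_neg_of_two_lt_addOrderOf (by omega)

theorem nsmul_ne_self (hg : addOrderOf g = n) (hj3 : 3 ≤ j) (hjn : j ≤ n) :
    (j - 1) • g ≠ g :=
  nsmul_ne_self_of_lt_addOrderOf (by omega) (by omega)

theorem eq_seqU_or_seqX_of_le (hg : addOrderOf g = n) (hj3 : 3 ≤ j) (hjn : j ≤ n)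
    {s : Multiset G} (hs : s ≤ replicate n g + {(j - 1) • g})
    (hs0 : s ≠ 0) (hsum : s.sum = 0) : s = seqU g n ∨ s = seqX g n j := by
  obtain ⟨a, ha, rfl | rfl⟩ := exists_eq_replicate_of_le_replicate_add_singleton hs
  · rw [sum_replicate, ← addOrderOf_dvd_iff_nsmul_eq_zero, hg] at hsum
    have : a ≠ 0 := by rintro rfl; exact hs0 rfl
    exact Or.inl (by rw [seqU, le_antisymm ha (Nat.le_of_dvd (by omega) hsum)])
  · rw [sum_add, sum_replicate, sum_singleton, ← add_nsmul, ← addOrderOf_dvd_iff_nsmul_eq_zero,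
      hg] at hsum
    have := Nat.eq_of_dvd_of_lt_two_mul (by omega) hsum (by omega)
    exact Or.inr (by rw [seqX, show a = n - j + 1 by omega])

theorem eq_seqW_of_le (hg : addOrderOf g = n) (hj : 1 ≤ j) (hjn : j ≤ n) {s : Multiset G}
    (hs : s ≤ seqW g j) (hs0 : s ≠ 0) (hsum : s.sum = 0) :
    s = seqW g j := by
  obtain ⟨b, hb, rfl | rfl⟩ := exists_eq_replicate_of_le_replicate_add_singleton hs
  · rw [sum_replicate, smul_neg, neg_eq_zero] at hsum
    have : b ≠ 0 := by rintro rfl; exact hs0 rfl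
    have := addOrderOf_le_of_nsmul_eq_zero (by omega) hsum
    omega
  · rw [sum_add, sum_replicate, sum_singleton, smul_neg, neg_add_eq_zero] at hsum
    obtain rfl : b = j - 1 :=
      nsmul_injOn_Iio_addOrderOf (x := g) (by simp; omega) (by simp; omega) hsum
    rfl

theorem isMinZeroSum_seqU (hg : addOrderOf g = n) (hj3 : 3 ≤ j) (hjn : j ≤ n) :
    IsMinZeroSum (seqU g n) := by
  refine ⟨?_, by simp [seqU, ← hg], fun t ht htsum => ?_⟩
  · rw [seqU, Ne, ← card_eq_zero, card_replicate]
    omega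
  by_cases ht0 : t = 0
  · exact Or.inl ht0
  refine Or.inr ((eq_seqU_or_seqX_of_le hg hj3 hjn (ht.trans (le_add_right _ _)) ht0
    htsum).resolve_right fun htX => ?_)
  have : (j - 1) • g ∈ seqU g n := mem_of_le ht (by simp [htX, seqX])
  exact absurd (eq_of_mem_replicate this) (nsmul_ne_self hg hj3 hjn)

theorem isMinZeroSum_seqW (hg : addOrderOf g = n) (hj3 : 3 ≤ j) (hjn : j ≤ n) :
    IsMinZeroSum (seqW g j) := by
  refine ⟨by simp [seqW], ?_, fun t ht htsum => ?_⟩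
  · rw [seqW, sum_add, sum_replicate, sum_singleton, smul_neg, neg_add_cancel]
  · by_cases ht0 : t = 0
    · exact Or.inl ht0
    · exact Or.inr (eq_seqW_of_le hg (by omega) hjn ht ht0 htsum)

theorem isMinZeroSum_seqX (hg : addOrderOf g = n) (hj3 : 3 ≤ j) (hjn : j ≤ n) :
    IsMinZeroSum (seqX g n j) := by
  refine ⟨by simp [seqX], ?_, fun t ht htsum => ?_⟩
  · rw [seqX, sum_add, sum_replicate, sum_singleton, ← add_nsmul,
      show n - j + 1 + (j - 1) = n by omega, ← hg, addOrderOf_nsmul_eq_zero]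
  by_cases ht0 : t = 0
  · exact Or.inl ht0
  have hle : t ≤ replicate n g + {(j - 1) • g} :=
    ht.trans ((add_le_add_iff_right _).2 ((replicate_le_replicate _).2 (by omega)))
  refine (eq_seqU_or_seqX_of_le hg hj3 hjn hle ht0 htsum).imp (fun htU => ?_) id
  have := card_le_card ht
  simp [htU, seqU, seqX] at this
  omega

theorem eq_of_le_seqA_of_isMinZeroSum (hg : addOrderOf g = n) (hj3 : 3 ≤ j) (hjn : j ≤ n)
    {s : Multiset G} (hs : s ≤ seqA g n j) (hmin : IsMinZeroSum s) :
    s = seqU g n ∨ s = seqV g ∨ s = seqW g j ∨ s = seqX g n j := by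
  by_cases hgs : g ∈ s
  · by_cases hngs : -g ∈ s
    · have hVs : seqV g ≤ s := by
        rw [le_iff_subset (by simpa [seqV] using self_ne_neg hg hj3 hjn)]
        simp [seqV, insert_eq_cons, cons_subset, hgs, hngs]
      refine Or.inr (Or.inl ?_)
      exact ((hmin.2.2 _ hVs (by simp [seqV])).resolve_left (by simp [seqV])).symm
    · rw [seqA, add_assoc] at hs
      exact (eq_seqU_or_seqX_of_le hg hj3 hjn (le_of_le_replicate_add hs hngs) hmin.1
        hmin.2.1).elim Or.inl (Or.inr ∘ Or.inr ∘ Or.inr)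
  · rw [seqA_eq_seqW_add_seqU, add_comm, seqU] at hs
    exact Or.inr (Or.inr (Or.inl (eq_seqW_of_le hg (by omega) hjn
      (le_of_le_replicate_add hs hgs) hmin.1 hmin.2.1)))

theorem count_self_seqV (hg : addOrderOf g = n) (hj3 : 3 ≤ j) (hjn : j ≤ n) :
    count g (seqV g) = 1 := by
  simp [seqV, self_ne_neg hg hj3 hjn]

theorem count_self_seqW (hg : addOrderOf g = n) (hj3 : 3 ≤ j) (hjn : j ≤ n) :
    count g (seqW g j) = 0 := by
  simp [seqW, count_replicate, (self_ne_neg hg hj3 hjn).symm, (nsmul_ne_self hg hj3 hjn).symm]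

theorem count_self_seqX (hg : addOrderOf g = n) (hj3 : 3 ≤ j) (hjn : j ≤ n) :
    count g (seqX g n j) = n - j + 1 := by
  simp [seqX, (nsmul_ne_self hg hj3 hjn).symm]

theorem count_self_seqA (hg : addOrderOf g = n) (hj3 : 3 ≤ j) (hjn : j ≤ n) :
    count g (seqA g n j) = n := by
  rw [seqA_eq_seqW_add_seqU, count_add, count_self_seqW hg hj3 hjn, seqU, count_replicate_self,
    zero_add]

theorem factUW_mem_bFact (hg : addOrderOf g = n) (hj3 : 3 ≤ j) (hjn : j ≤ n) :
    factUW g n j ∈ BFact (seqA g n j) := by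
  refine ⟨fun s hs => ?_, ?_⟩
  · rw [factUW, insert_eq_cons, mem_cons, mem_singleton] at hs
    rcases hs with rfl | rfl
    · exact isMinZeroSum_seqU hg hj3 hjn
    · exact isMinZeroSum_seqW hg hj3 hjn
  · rw [factUW, insert_eq_cons, sum_cons, sum_singleton, seqA_eq_seqW_add_seqU, add_comm]

theorem factVX_mem_bFact (hg : addOrderOf g = n) (hj3 : 3 ≤ j) (hjn : j ≤ n) :
    factVX g n j ∈ BFact (seqA g n j) := by
  refine ⟨fun s hs => ?_, ?_⟩
  · rcases mem_add.1 hs with hs | hs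
    · rw [eq_of_mem_replicate hs, seqV]
      exact isMinZeroSum_pair_neg fun h0 => by simp [h0] at hg; omega
    · rw [mem_singleton.1 hs]
      exact isMinZeroSum_seqX hg hj3 hjn
  · have hU : replicate n g = replicate (j - 1) g + replicate (n - j + 1) g := by
      rw [← replicate_add]
      congr 1
      omega
    rw [factVX, sum_add, sum_replicate, sum_singleton, seqV, seqX, seqA, hU, insert_eq_cons,
      ← singleton_add, nsmul_add, nsmul_singleton, nsmul_singleton]
    abel

theorem eq_factVX_of_forall_mem (hg : addOrderOf g = n) (hj3 : 3 ≤ j) (hjn : j ≤ n)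
    {F : Multiset (Multiset G)} (hF : F.sum = seqA g n j)
    (hparts : ∀ s ∈ F, s = seqV g ∨ s = seqX g n j) : F = factVX g n j := by
  obtain ⟨p, q, rfl⟩ := exists_eq_replicate_add_replicate hparts
  rw [sum_add, sum_replicate, sum_replicate] at hF
  have hcount := congrArg (count g) hF
  have hcard := congrArg card hF
  rw [count_add, count_nsmul, count_nsmul, count_self_seqV hg hj3 hjn,
    count_self_seqX hg hj3 hjn, count_self_seqA hg hj3 hjn] at hcount
  simp only [card_add, card_nsmul, seqV, seqX, seqA, card_pair, card_replicate,
    card_singleton] at hcard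
  obtain ⟨m, hm⟩ : ∃ m, n - j = m := ⟨_, rfl⟩
  rw [hm] at hcount hcard
  -- `hcount : p + q (m + 1) = n` (multiplicity of `g`), `hcard : 2 p + q (m + 2) = n + j`
  have hpq : p + q = j := by
    ring_nf at hcount hcard ⊢
    omega
  rcases Nat.eq_zero_or_pos m with rfl | hm0
  · obtain rfl : n = j := by omega
    have hneg : (n - 1) • g = -g := by
      rw [← hg]
      exact pred_addOrderOf_nsmul (by omega)
    have hXV : seqX g n n = seqV g := by
      rw [seqX, seqV, hneg, Nat.sub_self, zero_add, replicate_one, singleton_add, insert_eq_cons]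
    rw [factVX, hXV, ← replicate_add, ← replicate_one, ← replicate_add, hpq,
      Nat.sub_add_cancel (by omega)]
  · have hq : q * m = 1 * m := by
      ring_nf at hcount ⊢
      omega
    obtain rfl : q = 1 := Nat.eq_of_mul_eq_mul_right hm0 hq
    rw [factVX, replicate_one, show p = j - 1 by omega]

theorem bFact_seqA (hg : addOrderOf g = n) (hj3 : 3 ≤ j) (hjn : j ≤ n) :
    BFact (seqA g n j) = {factUW g n j, factVX g n j} := by
  refine Set.Subset.antisymm (fun F hF => ?_) (Set.insert_subset_iff.2
    ⟨factUW_mem_bFact hg hj3 hjn, Set.singleton_subset_iff.2 (factVX_mem_bFact hg hj3 hjn)⟩)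
  rw [Set.mem_insert_iff, Set.mem_singleton_iff]
  have hparts (s : Multiset G) (hs : s ∈ F) :=
    eq_of_le_seqA_of_isMinZeroSum hg hj3 hjn (hF.2 ▸ le_sum_of_mem hs) (hF.1 s hs)
  by_cases hU : seqU g n ∈ F
  · have hrest := erase_mem_bFact hF hU
    rw [seqA_eq_seqW_add_seqU, add_tsub_cancel_right,
      (isMinZeroSum_seqW hg hj3 hjn).bFact_eq] at hrest
    rw [← cons_erase hU, hrest]
    exact Or.inl rfl
  by_cases hW : seqW g j ∈ F
  · have hrest := erase_mem_bFact hF hW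
    rw [seqA_eq_seqW_add_seqU, add_tsub_cancel_left,
      (isMinZeroSum_seqU hg hj3 hjn).bFact_eq] at hrest
    rw [← cons_erase hW, hrest, factUW, pair_comm]
    exact Or.inl rfl
  refine Or.inr (eq_factVX_of_forall_mem hg hj3 hjn hF.2 fun s hs => ?_)
  rcases hparts s hs with rfl | hV | rfl | hX
  exacts [absurd hs hU, Or.inl hV, absurd hs hW, Or.inr hX]

theorem bdist_factUW_factVX (hg : addOrderOf g = n) (hj3 : 3 ≤ j) (hjn : j ≤ n) :
    bdist (factUW g n j) (factVX g n j) = j := by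
  have hdisj : Disjoint (factUW g n j) (factVX g n j) := by
    refine disjoint_left.2 fun {s} hUW hVX => ?_
    have hVX' : count g s = 1 ∨ count g s = n - j + 1 := by
      rcases mem_add.1 hVX with hV | hX
      · exact Or.inl (eq_of_mem_replicate hV ▸ count_self_seqV hg hj3 hjn)
      · exact Or.inr (mem_singleton.1 hX ▸ count_self_seqX hg hj3 hjn)
    rw [factUW, insert_eq_cons, mem_cons, mem_singleton] at hUW
    rcases hUW with rfl | rfl
    · rw [seqU, count_replicate_self] at hVX'
      omega
    · rw [count_self_seqW hg hj3 hjn] at hVX'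
      omega
  rw [bdist_of_disjoint hdisj]
  simp only [factUW, factVX, card_pair, card_add, card_replicate, card_singleton]
  omega

end CatenaryExample

theorem catDeg_j_example_general {G : Type*} [AddCommGroup G] (n : ℕ)
    (g : G) (hg : addOrderOf g = n)
    (j : ℕ) (hj3 : 3 ≤ j) (hjn : j ≤ n) :
    BFact (Multiset.replicate (j - 1) (-g) + Multiset.replicate n g + {(j - 1 : ℕ) • g}) =
      {({Multiset.replicate n g,
          Multiset.replicate (j - 1) (-g) + {(j - 1 : ℕ) • g}} : Multiset (Multiset G)),
        Multiset.replicate (j - 1) ({g, -g} : Multiset G) +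
          {Multiset.replicate (n - j + 1) g + {(j - 1 : ℕ) • g}}} ∧
    bCatDeg (Multiset.replicate (j - 1) (-g) + Multiset.replicate n g +
        {(j - 1 : ℕ) • g}) = j := by
  have hfact := CatenaryExample.bFact_seqA hg hj3 hjn
  have hdist := CatenaryExample.bdist_factUW_factVX hg hj3 hjn
  have hne : CatenaryExample.factUW g n j ≠ CatenaryExample.factVX g n j := fun h => by
    rw [h, bdist, tsub_self, card_zero, max_self] at hdist
    omega
  exact ⟨hfact, (bCatDeg_eq_bdist_of_bFact_eq_pair hne hfact).trans hdist⟩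

/-- For G cyclic of order n ≥ 4 with generator g, 3 ≤ j ≤ n and h = (j-1)g, the
zero-sum sequence A = (-g)^(j-1) gⁿ h has exactly the two factorizations U·W and
V^(j-1)·X, where U = gⁿ, V = g(-g), W = (-g)^(j-1)h, X = g^(n-j+1)h;
consequently c(A) = j. -/
theorem catDeg_j_example {G : Type*} [AddCommGroup G] [Fintype G] (n : ℕ)
    (hn : 4 ≤ n) (hcard : Fintype.card G = n) (g : G) (hg : addOrderOf g = n)
    (j : ℕ) (hj3 : 3 ≤ j) (hjn : j ≤ n) :
    BFact (Multiset.replicate (j - 1) (-g) + Multiset.replicate n g + {(j - 1 : ℕ) • g}) =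
      {({Multiset.replicate n g,
          Multiset.replicate (j - 1) (-g) + {(j - 1 : ℕ) • g}} : Multiset (Multiset G)),
        Multiset.replicate (j - 1) ({g, -g} : Multiset G) +
          {Multiset.replicate (n - j + 1) g + {(j - 1 : ℕ) • g}}} ∧
    bCatDeg (Multiset.replicate (j - 1) (-g) + Multiset.replicate n g +
        {(j - 1 : ℕ) • g}) = j :=
  catDeg_j_example_general n g hg j hj3 hjn
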